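/- arXiv:2511.15933 — 5 statements merged into one kernel-verified Lean document; each statement's English description precedes it below -/
import Mathlib

section
/- Let A and Q be groups with A commutative, let φ : Q →* MulAut A, and let N be a normal subgroup of the semidirect product A ⋊[φ] Q. Suppose there exists x ∈ N such that, writing q = rightHom x, the map A → A given by a ↦ φ q a * a⁻¹ is surjective. Then the range of inl : A →* A ⋊[φ] Q is contained in N. -/
theorem stmt_1 {A Q : Type*} [CommGroup A] [Group Q] (φ : Q →* MulAut A)
    (N : Subgroup (A ⋊[φ] Q)) (hN : N.Normal)
    (h : ∃ x ∈ N, Function.Surjective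
      (fun a : A => φ (SemidirectProduct.rightHom x) a * a⁻¹)) :
    (SemidirectProduct.inl : A →* A ⋊[φ] Q).range ≤ N := by
  obtain ⟨x, hx, hsurj⟩ := h
  rintro _ ⟨a, rfl⟩
  obtain ⟨c, hc⟩ := hsurj a
  have key : SemidirectProduct.inl a =
      x * SemidirectProduct.inl c * x⁻¹ * (SemidirectProduct.inl c)⁻¹ := by
    ext
    · simp only [← hc]
      simp
    · simp
  rw [key]
  have : x * SemidirectProduct.inl c * x⁻¹ * (SemidirectProduct.inl c)⁻¹ =
      x * (SemidirectProduct.inl c * x⁻¹ * (SemidirectProduct.inl c)⁻¹) := by group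
  rw [this]
  exact N.mul_mem hx (hN.conj_mem _ (N.inv_mem hx) _)
end

section
/- Let A and Q be groups with A commutative, let φ : Q →* MulAut A, and let N be a commutative normal subgroup of the semidirect product A ⋊[φ] Q. Suppose there exists x ∈ N such that, writing q = rightHom x, the map A → A given by a ↦ φ q a * a⁻¹ is surjective. Then A is a subsingleton (A is the trivial group). -/
theorem stmt_2 {A Q : Type*} [CommGroup A] [Group Q] (φ : Q →* MulAut A)
    (N : Subgroup (A ⋊[φ] Q)) (hN : N.Normal)
    (hcomm : ∀ x ∈ N, ∀ y ∈ N, x * y = y * x)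
    (h : ∃ x ∈ N, Function.Surjective
      (fun a : A => φ (SemidirectProduct.rightHom x) a * a⁻¹)) :
    Subsingleton A := by
  obtain ⟨x, hx, hsurj⟩ := h
  set q := SemidirectProduct.rightHom x with hq
  have hqx : q = x.right := rfl
  have key : ∀ a : A, φ q (a * (φ q a)⁻¹) = a * (φ q a)⁻¹ := by
    intro a
    have hmem : SemidirectProduct.inl a * x * (SemidirectProduct.inl a)⁻¹ ∈ N :=
      hN.conj_mem x hx _
    have hcm := hcomm _ hmem x hx
    have hl := congrArg SemidirectProduct.left hcm
    simp [SemidirectProduct.mul_left, SemidirectProduct.mul_right,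
      SemidirectProduct.inv_left, SemidirectProduct.inv_right, map_mul, map_inv,
      ← hqx] at hl
    simp only [map_mul, map_inv]
    refine (mul_left_cancel (a := x.left * (φ q) x.left) ?_).symm
    calc x.left * (φ q) x.left * (a * ((φ q) a)⁻¹)
        = a * x.left * ((φ q) a)⁻¹ * (φ q) x.left := by
          simp [mul_assoc, mul_comm, mul_left_comm]
      _ = x.left * ((φ q) a * (φ q) x.left * ((φ q) ((φ q) a))⁻¹) := hl
      _ = x.left * (φ q) x.left * ((φ q) a * ((φ q) ((φ q) a))⁻¹) := by
          simp [mul_assoc, mul_comm, mul_left_comm]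
  have fix : ∀ t : A, φ q t = t := by
    intro t
    obtain ⟨a, ha⟩ := hsurj t⁻¹
    simp only at ha
    have ht : a * (φ q a)⁻¹ = t := by
      have := congrArg (·⁻¹) ha
      simp only [mul_inv_rev, inv_inv] at this
      exact this
    rw [← ht]; exact key a
  constructor
  intro s t
  obtain ⟨a, ha⟩ := hsurj (s * t⁻¹)
  simp only [fix, mul_inv_cancel] at ha
  have : s = t := by
    have := ha.symm
    rwa [mul_inv_eq_one] at this
  exact this
end

section
/- Every nontrivial commutative normal subgroup of the dihedral group of order 12 contains the rotation r 2 (the rotation by 120°) or the rotation r 3 (the rotation by 180°). -/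
/-!
A reflection `sr i` in a normal subgroup brings its conjugate `sr (i - 2)` along, and the product
of the two is the rotation `r (-2)`. A nontrivial rotation `r i` of `D₆` has a multiple equal to
`r 2` or `r 3`, according as its order is divisible by 3 or not.
-/

theorem ZMod.exists_mul_eq_two_or_three {i : ZMod 6} (hi : i ≠ 0) :
    ∃ k, i * k = 2 ∨ i * k = 3 := by
  revert i
  decide

namespace DihedralGroup

variable {n : ℕ}

theorem r_two_mem_of_sr_mem {N : Subgroup (DihedralGroup n)} (hN : N.Normal) {i : ZMod n}
    (hi : sr i ∈ N) : r 2 ∈ N := by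
  have hconj : sr (i - 2) ∈ N := by
    have := hN.conj_mem _ hi (r 1)
    rwa [inv_r, r_mul_sr, sr_mul_r, show i - 1 + -1 = i - 2 by ring] at this
  have hprod : r (-2) ∈ N := by
    have := N.mul_mem hi hconj
    rwa [sr_mul_sr, sub_sub_cancel_left] at this
  simpa only [inv_r, neg_neg] using N.inv_mem hprod

theorem r_mul_mem [NeZero n] {N : Subgroup (DihedralGroup n)} {i : ZMod n} (hi : r i ∈ N)
    (k : ZMod n) : r (i * k) ∈ N := by
  simpa only [r_pow, ZMod.natCast_zmod_val] using N.pow_mem hi k.val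

end DihedralGroup

theorem stmt_3_general (N : Subgroup (DihedralGroup 6)) (hN : N.Normal)
    (hnt : N ≠ ⊥) :
    DihedralGroup.r 2 ∈ N ∨ DihedralGroup.r 3 ∈ N := by
  obtain ⟨x, hxN, hx1⟩ := N.bot_or_exists_ne_one.resolve_left hnt
  cases x with
  | r i =>
    have hi : i ≠ 0 := by rintro rfl; exact hx1 DihedralGroup.r_zero
    obtain ⟨k, hk | hk⟩ := ZMod.exists_mul_eq_two_or_three hi
    · exact .inl (hk ▸ DihedralGroup.r_mul_mem hxN k)
    · exact .inr (hk ▸ DihedralGroup.r_mul_mem hxN k)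
  | sr i => exact .inl (DihedralGroup.r_two_mem_of_sr_mem hN hxN)

theorem stmt_3 (N : Subgroup (DihedralGroup 6)) (hN : N.Normal)
    (hcomm : ∀ x ∈ N, ∀ y ∈ N, x * y = y * x) (hnt : N ≠ ⊥) :
    DihedralGroup.r 2 ∈ N ∨ DihedralGroup.r 3 ∈ N :=
  stmt_3_general N hN hnt
end

section
/- Let n be a natural number with 1 < n and gcd(n, 6) = 1. Let φ : DihedralGroup 6 →* GL(Fin 2, ZMod n) be a group homomorphism with φ (r 1) equal to the matrix R with rows (0, 1) and (−1, 1) and φ (sr 0) equal to the matrix S with rows (0, 1) and (1, 0), and form the semidirect product H = A ⋊ DihedralGroup 6, where A is the additive group (Fin 2 → ZMod n) (written multiplicatively) and g ∈ DihedralGroup 6 acts on A by matrix–vector multiplication by φ g. Then every commutative normal subgroup N of H has index at least 12 in H. -/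
open Matrix DihedralGroup

theorem stmt_7 (n : ℕ) (hn : 1 < n) (h6 : Nat.gcd n 6 = 1)
    (φ : DihedralGroup 6 →* GL (Fin 2) (ZMod n))
    (hR : (φ (DihedralGroup.r 1) : Matrix (Fin 2) (Fin 2) (ZMod n)) = !![0, 1; -1, 1])
    (hS : (φ (DihedralGroup.sr 0) : Matrix (Fin 2) (Fin 2) (ZMod n)) = !![0, 1; 1, 0])
    (ψ : DihedralGroup 6 →* MulAut (Multiplicative (Fin 2 → ZMod n)))
    (hψ : ∀ (g : DihedralGroup 6) (v : Fin 2 → ZMod n),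
      Multiplicative.toAdd (ψ g (Multiplicative.ofAdd v)) =
        (φ g : Matrix (Fin 2) (Fin 2) (ZMod n)).mulVec v)
    (N : Subgroup (Multiplicative (Fin 2 → ZMod n) ⋊[ψ] DihedralGroup 6))
    (hNormal : N.Normal) (hcomm : ∀ x ∈ N, ∀ y ∈ N, x * y = y * x) :

    12 ≤ N.index := by
  haveI : NeZero n := ⟨by omega⟩
  have key : ∀ x ∈ N, x.right = 1 := by
    intro x hx
    have hψ' : ∀ (g : DihedralGroup 6) (z : Multiplicative (Fin 2 → ZMod n)),
        Multiplicative.toAdd (ψ g z) = (φ g : Matrix (Fin 2) (Fin 2) (ZMod n)).mulVec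
          (Multiplicative.toAdd z) := fun g z => hψ g (Multiplicative.toAdd z)
    have main : ∀ b : Fin 2 → ZMod n,
        (φ x.right : Matrix (Fin 2) (Fin 2) (ZMod n)).mulVec
          (b - (φ x.right : Matrix (Fin 2) (Fin 2) (ZMod n)).mulVec b)
          = b - (φ x.right : Matrix (Fin 2) (Fin 2) (ZMod n)).mulVec b := by
      intro b
      set B : Multiplicative (Fin 2 → ZMod n) ⋊[ψ] DihedralGroup 6 :=
        ⟨Multiplicative.ofAdd b, 1⟩ with hB
      have hyval : B * x * B⁻¹ * x⁻¹ =
          ⟨Multiplicative.ofAdd (b - (φ x.right : Matrix (Fin 2) (Fin 2) (ZMod n)).mulVec b),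
            1⟩ := by
        refine SemidirectProduct.ext ?_ ?_
        · apply Multiplicative.toAdd.injective
          simp only [SemidirectProduct.mul_left, SemidirectProduct.inv_left,
            SemidirectProduct.mul_right, SemidirectProduct.inv_right, hB, map_inv,
            MulAut.apply_inv_self, _root_.map_one, MulAut.one_apply, one_mul, mul_one, inv_one,
            toAdd_mul, toAdd_inv, hψ', toAdd_ofAdd, Matrix.mulVec_neg, Units.val_one,
            Matrix.one_mulVec, Matrix.mulVec_sub]
          abel
        · simp [hB]
      have hy : B * x * B⁻¹ * x⁻¹ ∈ N := mul_mem (hNormal.conj_mem x hx B) (inv_mem hx)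
      rw [hyval] at hy
      have hc := congrArg SemidirectProduct.left (hcomm _ hx _ hy)
      simp only [SemidirectProduct.mul_left, SemidirectProduct.mul_right] at hc
      have hc2 := congrArg Multiplicative.toAdd hc
      simp only [toAdd_mul, hψ', toAdd_ofAdd, _root_.map_one, MulAut.one_apply] at hc2
      -- hc2 : toAdd x.left + M *ᵥ (b - M*ᵥb) = (b - M*ᵥb) + toAdd x.left
      rw [add_comm (b - (φ x.right : Matrix (Fin 2) (Fin 2) (ZMod n)).mulVec b)] at hc2
      exact add_left_cancel hc2
    revert main
    generalize x.right = g
    intro main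
    have hz : ∀ c : ℕ, Nat.Coprime n c → (c : ZMod n) ≠ 0 := by
      intro c hcop h
      rw [ZMod.natCast_eq_zero_iff] at h
      have := Nat.Coprime.eq_one_of_dvd hcop h
      omega
    have hco : Nat.Coprime n 6 := h6
    have hz1 : (1 : ZMod n) ≠ 0 := by
      have := hz 1 (Nat.coprime_one_right n); simpa using this
    have hz2 : (2 : ZMod n) ≠ 0 := by
      have := hz 2 (Nat.Coprime.coprime_dvd_right (by norm_num) hco); simpa using this
    have hz3 : (3 : ZMod n) ≠ 0 := by
      have := hz 3 (Nat.Coprime.coprime_dvd_right (by norm_num) hco); simpa using this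
    have hz4 : (4 : ZMod n) ≠ 0 := by
      have h2 := Nat.Coprime.coprime_dvd_right (show (2:ℕ) ∣ 6 by norm_num) hco
      have := hz 4 (by simpa using h2.pow_right 2); simpa using this
    -- powers of R
    have hφr : ∀ k : ℕ, (φ (r (k : ZMod 6)) : Matrix (Fin 2) (Fin 2) (ZMod n))
        = (!![0, 1; -1, 1] : Matrix (Fin 2) (Fin 2) (ZMod n)) ^ k := by
      intro k
      rw [← r_one_pow, map_pow, Units.val_pow_eq_pow_val, hR]
    have hφsr : ∀ k : ℕ, (φ (sr (k : ZMod 6)) : Matrix (Fin 2) (Fin 2) (ZMod n))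
        = !![0, 1; 1, 0] * (!![0, 1; -1, 1] : Matrix (Fin 2) (Fin 2) (ZMod n)) ^ k := by
      intro k
      have : (sr ((k : ZMod 6)) : DihedralGroup 6) = sr 0 * r 1 ^ k := by
        rw [r_one_pow, sr_mul_r, zero_add]
      rw [this, _root_.map_mul, map_pow, Units.val_mul, Units.val_pow_eq_pow_val, hR, hS]
    have e1 : (φ (r 1) : Matrix (Fin 2) (Fin 2) (ZMod n)) = !![0,1;-1,1] := hR
    have e2 : (φ (r 2) : Matrix (Fin 2) (Fin 2) (ZMod n)) = !![-1,1;-1,0] := by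
      have := hφr 2; norm_num at this; rw [this]; try norm_num [pow_succ, Matrix.mul_fin_two]
    have e3 : (φ (r 3) : Matrix (Fin 2) (Fin 2) (ZMod n)) = !![-1,0;0,-1] := by
      have := hφr 3; norm_num at this; rw [this]; try norm_num [pow_succ, Matrix.mul_fin_two]
    have e4 : (φ (r 4) : Matrix (Fin 2) (Fin 2) (ZMod n)) = !![0,-1;1,-1] := by
      have := hφr 4; norm_num at this; rw [this]; try norm_num [pow_succ, Matrix.mul_fin_two]
    have e5 : (φ (r 5) : Matrix (Fin 2) (Fin 2) (ZMod n)) = !![1,-1;1,0] := by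
      have := hφr 5; norm_num at this; rw [this]; try norm_num [pow_succ, Matrix.mul_fin_two]
    have f0 : (φ (sr 0) : Matrix (Fin 2) (Fin 2) (ZMod n)) = !![0,1;1,0] := hS
    have f1 : (φ (sr 1) : Matrix (Fin 2) (Fin 2) (ZMod n)) = !![-1,1;0,1] := by
      have := hφsr 1; norm_num at this; rw [this]; try norm_num [pow_succ, Matrix.mul_fin_two]
    have f2 : (φ (sr 2) : Matrix (Fin 2) (Fin 2) (ZMod n)) = !![-1,0;-1,1] := by
      have := hφsr 2; norm_num at this; rw [this]; try norm_num [pow_succ, Matrix.mul_fin_two]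
    have f3 : (φ (sr 3) : Matrix (Fin 2) (Fin 2) (ZMod n)) = !![0,-1;-1,0] := by
      have := hφsr 3; norm_num at this; rw [this]; try norm_num [pow_succ, Matrix.mul_fin_two]
    have f4 : (φ (sr 4) : Matrix (Fin 2) (Fin 2) (ZMod n)) = !![1,-1;0,-1] := by
      have := hφsr 4; norm_num at this; rw [this]; try norm_num [pow_succ, Matrix.mul_fin_two]
    have f5 : (φ (sr 5) : Matrix (Fin 2) (Fin 2) (ZMod n)) = !![1,0;1,-1] := by
      have := hφsr 5; norm_num at this; rw [this]; try norm_num [pow_succ, Matrix.mul_fin_two]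
    have hcases : ∀ j : ZMod 6, j = 0 ∨ j = 1 ∨ j = 2 ∨ j = 3 ∨ j = 4 ∨ j = 5 := by decide
    cases g with
    | r i =>
      rcases hcases i with rfl | rfl | rfl | rfl | rfl | rfl
      · exact DihedralGroup.one_def.symm
      · exfalso
        have h := congrFun (main ![1,0]) 1
        rw [e1] at h
        simp [Matrix.mulVec, dotProduct, Fin.sum_univ_two] at h
        exact hz1 h.symm
      · exfalso
        have h := congrFun (main ![1,0]) 1
        rw [e2] at h
        simp [Matrix.mulVec, dotProduct, Fin.sum_univ_two] at h
        exact hz3 (by linear_combination -h)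
      · exfalso
        have h := congrFun (main ![1,0]) 0
        rw [e3] at h
        simp [Matrix.mulVec, dotProduct, Fin.sum_univ_two] at h
        exact hz4 (by linear_combination -h)
      · exfalso
        have h := congrFun (main ![1,0]) 1
        rw [e4] at h
        simp [Matrix.mulVec, dotProduct, Fin.sum_univ_two] at h
        exact hz3 (by linear_combination h)
      · exfalso
        have h := congrFun (main ![1,0]) 0
        rw [e5] at h
        simp [Matrix.mulVec, dotProduct, Fin.sum_univ_two] at h
        exact hz1 h
    | sr i =>
      exfalso
      rcases hcases i with rfl | rfl | rfl | rfl | rfl | rfl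
      · have h := congrFun (main ![1,0]) 0
        rw [f0] at h
        simp [Matrix.mulVec, dotProduct, Fin.sum_univ_two] at h
        exact hz2 (by linear_combination -h)
      · have h := congrFun (main ![1,0]) 0
        rw [f1] at h
        simp [Matrix.mulVec, dotProduct, Fin.sum_univ_two] at h
        exact hz4 (by linear_combination -h)
      · have h := congrFun (main ![1,0]) 0
        rw [f2] at h
        simp [Matrix.mulVec, dotProduct, Fin.sum_univ_two] at h
        exact hz4 (by linear_combination -h)
      · have h := congrFun (main ![1,0]) 0
        rw [f3] at h
        simp [Matrix.mulVec, dotProduct, Fin.sum_univ_two] at h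
        exact hz2 (by linear_combination -h)
      · have h := congrFun (main ![0,1]) 0
        rw [f4] at h
        simp [Matrix.mulVec, dotProduct, Fin.sum_univ_two] at h
        exact hz2 (by linear_combination -h)
      · have h := congrFun (main ![0,1]) 1
        rw [f5] at h
        simp [Matrix.mulVec, dotProduct, Fin.sum_univ_two] at h
        exact hz4 (by linear_combination -h)
  have hle : N ≤ (SemidirectProduct.rightHom :
      Multiplicative (Fin 2 → ZMod n) ⋊[ψ] DihedralGroup 6 →* DihedralGroup 6).ker :=
    fun x hx => key x hx
  have hker : (SemidirectProduct.rightHom :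
      Multiplicative (Fin 2 → ZMod n) ⋊[ψ] DihedralGroup 6 →* DihedralGroup 6).ker.index = 12 := by
    rw [Subgroup.index_ker]
    rw [MonoidHom.range_eq_top.mpr SemidirectProduct.rightHom_surjective]
    rw [show Nat.card (⊤ : Subgroup (DihedralGroup 6)) = Nat.card (DihedralGroup 6) from
      Nat.card_congr Subgroup.topEquiv.toEquiv, DihedralGroup.nat_card]
  have hdvd := Subgroup.index_dvd_of_le hle
  rw [hker] at hdvd
  haveI : Finite (Multiplicative (Fin 2 → ZMod n) ⋊[ψ] DihedralGroup 6) := by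
    apply Finite.of_injective (fun x => (x.left, x.right))
    intro a b h
    exact SemidirectProduct.ext (congrArg Prod.fst h) (congrArg Prod.snd h)
  exact Nat.le_of_dvd (Nat.pos_of_ne_zero (Subgroup.index_ne_zero_of_finite)) hdvd
end

section
/- Let G be a commutative group acting on a set X, and let σ : X → X be an involution (σ ∘ σ = id) with no fixed points (σ x ≠ x for all x) that commutes with the action (σ (g • x) = g • σ x for all g ∈ G, x ∈ X). Then the following are equivalent: (1) there exists a subset T of X that is G-invariant (g • x ∈ T whenever x ∈ T) and contains exactly one element from each pair {x, σ x} (i.e., for every x ∈ X, x ∈ T if and only if σ x ∉ T); (2) there is no g ∈ G and x ∈ X with g • x = σ x. -/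
theorem stmt_9 {G X : Type*} [CommGroup G] [MulAction G X]
    (σ : X → X) (hinv : σ ∘ σ = id) (hfix : ∀ x, σ x ≠ x)
    (hcomm : ∀ (g : G) (x : X), σ (g • x) = g • σ x) :
    (∃ T : Set X, (∀ (g : G), ∀ x ∈ T, g • x ∈ T) ∧ (∀ x, x ∈ T ↔ σ x ∉ T)) ↔
      ¬ ∃ (g : G) (x : X), g • x = σ x := by
  have hσσ : ∀ x, σ (σ x) = x := fun x => congrFun hinv x
  constructor
  · rintro ⟨T, hTinv, hTone⟩ ⟨g, x, hg⟩
    by_cases hx : x ∈ T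
    · have h1 : σ x ∈ T := hg ▸ hTinv g x hx
      exact (hTone x).mp hx h1
    · have h2 : σ x ∈ T := by
        by_contra h; exact hx ((hTone x).mpr h)
      have h3 : g • σ x ∈ T := hTinv g _ h2
      rw [← hcomm, hg, hσσ] at h3
      exact hx h3
  · intro hno
    set r : X → X → Prop := fun x y => (∃ g : G, g • x = y) ∨ (∃ g : G, g • σ x = y) with hr
    have hrefl : ∀ x, r x x := fun x => Or.inl ⟨1, one_smul _ _⟩
    have hsymm : ∀ {x y}, r x y → r y x := by
      rintro x y (⟨g, hg⟩ | ⟨g, hg⟩)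
      · exact Or.inl ⟨g⁻¹, by rw [← hg, inv_smul_smul]⟩
      · refine Or.inr ⟨g⁻¹, ?_⟩
        rw [← hg, hcomm, hσσ, inv_smul_smul]
    have htrans : ∀ {x y z}, r x y → r y z → r x z := by
      rintro x y z (⟨g, hg⟩ | ⟨g, hg⟩) (⟨h, hh⟩ | ⟨h, hh⟩)
      · exact Or.inl ⟨h * g, by rw [mul_smul, hg, hh]⟩
      · refine Or.inr ⟨h * g, ?_⟩
        rw [mul_smul]
        rw [← hg, hcomm] at hh
        exact hh
      · exact Or.inr ⟨h * g, by rw [mul_smul, hg, hh]⟩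
      · refine Or.inl ⟨h * g, ?_⟩
        rw [mul_smul]
        rw [← hg, hcomm, hσσ] at hh
        exact hh
    let s : Setoid X := ⟨r, ⟨hrefl, hsymm, htrans⟩⟩
    refine ⟨{x | ∃ g : G, g • (Quotient.out (Quotient.mk s x)) = x}, ?_, ?_⟩
    · rintro g x ⟨h, hh⟩
      have hq : Quotient.mk s (g • x) = Quotient.mk s x :=
        Quotient.sound (hsymm (Or.inl ⟨g, rfl⟩))
      rw [Set.mem_setOf_eq, hq]
      exact ⟨g * h, by rw [mul_smul, hh]⟩
    · intro x
      have hq : Quotient.mk s (σ x) = Quotient.mk s x :=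
        Quotient.sound (hsymm (Or.inr ⟨1, one_smul _ _⟩))
      have hox : s.r (Quotient.out (Quotient.mk s x)) x :=
        Quotient.exact (Quotient.out_eq _)
      set o := Quotient.out (Quotient.mk s x) with ho
      simp only [Set.mem_setOf_eq, hq, ← ho]
      constructor
      · rintro ⟨g, hg⟩ ⟨h, hh⟩
        exact hno ⟨h * g⁻¹, x, by rw [mul_smul, ← hh, ← hg, inv_smul_smul]⟩
      · intro hns
        rcases hox with ⟨g, hg⟩ | ⟨g, hg⟩
        · exact ⟨g, hg⟩
        · exact absurd ⟨g, by rw [← hg, hcomm, hσσ]⟩ hns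
end
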